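/- For every t ≥ 0, the subgradient p(t) = Vᵀq(t) arising from the gradient flow of J(u) = ‖Vu‖₁ is itself a (generalized) eigenfunction of J: p(t) ∈ ∂J(p(t)). -/

import Mathlib

/-!
After the change of variables `w ↦ V w` the functional becomes the plain `ℓ¹` norm, and `q(t)` is a vector with
entries in `{-1, 0, 1}`. Such a vector is a subgradient of `‖·‖₁` at itself, since
`|qᵢ| + qᵢ (wᵢ - qᵢ) = qᵢ wᵢ ≤ |wᵢ|`; subgradients transport along the orthogonal `Vᵀ`.
-/

open Matrix

/-- `p` is a subgradient of `J` at `u` in `ℝⁿ`: `J v ≥ J u + ⟨p, v - u⟩` for all `v`. -/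
def IsSubgradientAt {n : ℕ} (J : (Fin n → ℝ) → ℝ) (u p : Fin n → ℝ) : Prop :=
  ∀ v : Fin n → ℝ, J v ≥ J u + p ⬝ᵥ (v - u)

lemma abs_add_mul_sub_le_abs {q : ℝ} (hq : q = -1 ∨ q = 0 ∨ q = 1) (w : ℝ) :
    |q| + q * (w - q) ≤ |w| := by
  rcases hq with rfl | rfl | rfl
  · simp only [abs_neg, abs_one]
    linarith [neg_le_abs w]
  · simp
  · simp only [abs_one]
    linarith [le_abs_self w]

lemma isSubgradientAt_sum_abs_self {n : ℕ} {q : Fin n → ℝ}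
    (hq : ∀ i, q i = -1 ∨ q i = 0 ∨ q i = 1) :
    IsSubgradientAt (fun w => ∑ i, |w i|) q q := fun w => by
  rw [ge_iff_le, dotProduct, ← Finset.sum_add_distrib]
  exact Finset.sum_le_sum fun i _ => abs_add_mul_sub_le_abs (hq i) (w i)

lemma IsSubgradientAt.comp_mulVec {m n : ℕ} {J : (Fin m → ℝ) → ℝ} {u p : Fin m → ℝ}
    (h : IsSubgradientAt J u p) {V : Matrix (Fin m) (Fin n) ℝ} (hV : V * Vᵀ = 1) :
    IsSubgradientAt (J ∘ V.mulVec) (Vᵀ *ᵥ u) (Vᵀ *ᵥ p) := fun v => by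
  have hu : V *ᵥ (Vᵀ *ᵥ u) = u := by rw [mulVec_mulVec, hV, one_mulVec]
  have hp : Vᵀ *ᵥ p ⬝ᵥ (v - Vᵀ *ᵥ u) = p ⬝ᵥ (V *ᵥ v - u) := by
    rw [mulVec_transpose, ← dotProduct_mulVec, mulVec_sub, hu]
  simpa only [Function.comp_apply, hu, hp] using h (V *ᵥ v)

theorem gradientFlow_subgradient_is_eigenfunction_general
    {n : ℕ} (V : Matrix (Fin n) (Fin n) ℝ) (hV : Vᵀ * V = 1)
    (J : (Fin n → ℝ) → ℝ) (hJ : ∀ w, J w = ∑ i, |V.mulVec w i|)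
    (ζ : Fin n → ℝ)
    (p : ℝ → Fin n → ℝ)
    (hp : ∀ t : ℝ, p t = Vᵀ.mulVec (fun i => if t < |ζ i| then Real.sign (ζ i) else 0)) :
    ∀ t : ℝ, 0 ≤ t → IsSubgradientAt J (p t) (p t) := by
  intro t _
  have hJ_comp : J = (fun w => ∑ i, |w i|) ∘ V.mulVec := funext hJ
  rw [hJ_comp, hp t]
  refine (isSubgradientAt_sum_abs_self fun i => ?_).comp_mulVec (mul_eq_one_comm.mp hV)
  split_ifs
  · exact Real.sign_apply_eq (ζ i)
  · simp

/-- For `J(u) = ‖Vu‖₁` with `V` orthogonal, the subgradient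
`p(t) = Vᵀ q(t)`, `qᵢ(t) = sign(ζᵢ)` if `|ζᵢ| > t` and `0` otherwise (`ζ = Vf`),
arising from the gradient flow, is itself a (generalized) eigenfunction of `J`:
`p(t) ∈ ∂J(p(t))` for every `t ≥ 0`. -/
theorem gradientFlow_subgradient_is_eigenfunction
    {n : ℕ} (V : Matrix (Fin n) (Fin n) ℝ) (hV : Vᵀ * V = 1)
    (J : (Fin n → ℝ) → ℝ) (hJ : ∀ w, J w = ∑ i, |V.mulVec w i|)
    (f ζ : Fin n → ℝ) (hζ : ζ = V.mulVec f)
    (p : ℝ → Fin n → ℝ)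
    (hp : ∀ t : ℝ, p t = Vᵀ.mulVec (fun i => if t < |ζ i| then Real.sign (ζ i) else 0)) :
    ∀ t : ℝ, 0 ≤ t → IsSubgradientAt J (p t) (p t) :=
  gradientFlow_subgradient_is_eigenfunction_general V hV J hJ ζ p hp
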